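/- arXiv:2009.13218 — 9 statements merged into one kernel-verified Lean document; each statement's English description precedes it below -/
import Mathlib

section
/- (Orthogonality by propagation.) Let A and B be n×n normal matrices over R = {0, −1}. If A⊕B = Z_n, then A and B are mutually orthogonal, i.e., A⊙B = Z_n = B⊙A. -/
/-- A matrix over `R = {0,-1} ⊆ ℤ` is normal: zero diagonal, entries `0` or `-1`. -/
def IsNormal {n : ℕ} (A : Matrix (Fin n) (Fin n) ℤ) : Prop :=
  (∀ i, A i i = 0) ∧ ∀ i j, A i j = 0 ∨ A i j = -1

/-- Tropical (max-plus) matrix product: `(A⊙B) i j = max_k (A i k + B k j)`. -/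
noncomputable def tropMul {n : ℕ} (A B : Matrix (Fin n) (Fin n) ℤ) :
    Matrix (Fin n) (Fin n) ℤ :=
  Matrix.of fun i j => sSup (Set.range fun k => A i k + B k j)

/-- Tropical sum: entrywise maximum. -/
def tropSum {n : ℕ} (A B : Matrix (Fin n) (Fin n) ℤ) : Matrix (Fin n) (Fin n) ℤ :=
  Matrix.of fun i j => max (A i j) (B i j)

lemma aux {n : ℕ} (A B : Matrix (Fin n) (Fin n) ℤ) (hA : IsNormal A) (hB : IsNormal B)
    (h : tropSum A B = 0) : tropMul A B = 0 := by
  ext i j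
  have hmax : max (A i j) (B i j) = 0 := congrFun (congrFun h i) j
  have hle : ∀ k, A i k ≤ 0 := fun k => by rcases hA.2 i k with h' | h' <;> omega
  have hle' : ∀ k, B k j ≤ 0 := fun k => by rcases hB.2 k j with h' | h' <;> omega
  simp only [tropMul, Matrix.of_apply, Matrix.zero_apply]
  apply le_antisymm
  · haveI : Nonempty (Fin n) := ⟨i⟩
    apply csSup_le (Set.range_nonempty _)
    rintro x ⟨k, rfl⟩
    have := hle k; have := hle' k
    show A i k + B k j ≤ 0
    omega
  · have hbdd : BddAbove (Set.range fun k => A i k + B k j) := by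
      refine ⟨0, ?_⟩
      rintro x ⟨k, rfl⟩
      have := hle k; have := hle' k
      show A i k + B k j ≤ 0
      omega
    rcases max_cases (A i j) (B i j) with ⟨h1, _⟩ | ⟨h1, _⟩
    · have : A i j + B j j = 0 := by rw [hB.1 j]; omega
      calc (0:ℤ) = A i j + B j j := this.symm
        _ ≤ _ := le_csSup hbdd ⟨j, rfl⟩
    · have : A i i + B i j = 0 := by rw [hA.1 i]; omega
      calc (0:ℤ) = A i i + B i j := this.symm
        _ ≤ _ := le_csSup hbdd ⟨i, rfl⟩

theorem stmt_2 {n : ℕ} (A B : Matrix (Fin n) (Fin n) ℤ) (hA : IsNormal A) (hB : IsNormal B)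
    (h : tropSum A B = 0) :
    tropMul A B = 0 ∧ tropMul B A = 0 := by
  constructor
  · exact aux A B hA hB h
  · apply aux B A hB hA
    ext i j
    have := congrFun (congrFun h i) j
    simpa [tropSum, max_comm] using this
end

section
/- Let A and B be n×n normal matrices over R = {0, −1} and let p, q ∈ [n] with p ≠ q. Suppose A is V(p;q)-generic, i.e., A_{ij} = 0 if and only if (i = j or i = p or j = q). If A⊙B = Z_n = B⊙A, then for all i, j ∈ [n]: B_{ij} = 0, or both B_{qj} = 0 and B_{ip} = 0. -/
lemma attain_aux {n : ℕ} [Nonempty (Fin n)] (f : Fin n → ℤ)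
    (h : sSup (Set.range f) = 0) : ∃ k, f k = 0 := by
  have h1 : sSup (Set.range f) ∈ Set.range f :=
    Set.Nonempty.csSup_mem (Set.range_nonempty f) (Set.finite_range f)
  rw [h] at h1
  obtain ⟨k, hk⟩ := h1
  exact ⟨k, hk⟩

theorem stmt_5 {n : ℕ} (A B : Matrix (Fin n) (Fin n) ℤ) (hA : IsNormal A) (hB : IsNormal B)
    (p q : Fin n) (hpq : p ≠ q)
    (hgen : ∀ i j, A i j = 0 ↔ (i = j ∨ i = p ∨ j = q))
    (h1 : tropMul A B = 0) (h2 : tropMul B A = 0) :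
    ∀ i j, B i j = 0 ∨ (B q j = 0 ∧ B i p = 0) := by
  haveI : Nonempty (Fin n) := ⟨p⟩
  intro i j
  right
  constructor
  · have hq : sSup (Set.range fun k => A q k + B k j) = 0 := by
      have := congrFun (congrFun h1 q) j
      simpa [tropMul] using this
    obtain ⟨k, hk⟩ := attain_aux _ hq
    have hAqk : A q k = 0 ∧ B k j = 0 := by
      rcases hA.2 q k with h | h <;> rcases hB.2 k j with h' | h' <;> omega
    have hkq : k = q := by
      rcases (hgen q k).1 hAqk.1 with h | h | h
      · exact h.symm
      · exact absurd h.symm hpq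
      · exact h
    rw [← hkq]; exact hAqk.2
  · have hp : sSup (Set.range fun k => B i k + A k p) = 0 := by
      have := congrFun (congrFun h2 i) p
      simpa [tropMul] using this
    obtain ⟨k, hk⟩ := attain_aux _ hp
    have hAkp : B i k = 0 ∧ A k p = 0 := by
      rcases hB.2 i k with h | h <;> rcases hA.2 k p with h' | h' <;> omega
    have hkp : k = p := by
      rcases (hgen k p).1 hAkp.2 with h | h | h
      · exact h
      · exact h
      · exact absurd h hpq
    rw [← hkp]; exact hAkp.1
end

section
/- For every n ≥ 2 there exist mutually orthogonal n×n normal matrices A, B over R = {0, −1} with ν(A) + ν(B) − 2n = 4n − 6. Consequently, the minimal number Θ_n of off-diagonal zeros among mutually orthogonal pairs of n×n normal matrices satisfies Θ_n ≤ 4n − 6. -/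
/-- `nu A` is the number of zero entries of `A`. -/
def nu {n : ℕ} (A : Matrix (Fin n) (Fin n) ℤ) : ℕ :=
  (Finset.univ.filter (fun p : Fin n × Fin n => A p.1 p.2 = 0)).card

/-- The matrix with zeros exactly on row `a`, column `b`, and the diagonal. -/
def Mab (n : ℕ) (a b : Fin n) : Matrix (Fin n) (Fin n) ℤ :=
  Matrix.of fun i j => if i = a ∨ j = b ∨ i = j then 0 else -1

lemma Mab_normal {n : ℕ} (a b : Fin n) : IsNormal (Mab n a b) := by
  constructor
  · intro i; simp [Mab]
  · intro i j
    by_cases h : i = a ∨ j = b ∨ i = j <;> simp [Mab, h]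

lemma trop_zero {n : ℕ} (hn : 0 < n) {A B : Matrix (Fin n) (Fin n) ℤ}
    (hA : IsNormal A) (hB : IsNormal B)
    (h : ∀ i j, ∃ k, A i k = 0 ∧ B k j = 0) : tropMul A B = 0 := by
  haveI : NeZero n := ⟨hn.ne'⟩
  ext i j
  obtain ⟨k, hk1, hk2⟩ := h i j
  simp only [tropMul, Matrix.of_apply, Matrix.zero_apply]
  apply le_antisymm
  · apply csSup_le (Set.range_nonempty _)
    rintro x ⟨m, rfl⟩
    have h1 : A i m ≤ 0 := by rcases hA.2 i m with h' | h' <;> omega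
    have h2 : B m j ≤ 0 := by rcases hB.2 m j with h' | h' <;> omega
    show A i m + B m j ≤ 0
    omega
  · have hmem : (0:ℤ) ∈ Set.range fun k => A i k + B k j := ⟨k, show A i k + B k j = 0 by omega⟩
    exact le_csSup (Set.Finite.bddAbove (Set.finite_range _)) hmem

lemma nu_Mab {n : ℕ} (a b : Fin n) (hab : a ≠ b) : nu (Mab n a b) = 3 * n - 3 := by
  have hn : 2 ≤ n := by
    have h1 := a.isLt
    have h2 := b.isLt
    have h3 : a.val ≠ b.val := fun h => hab (Fin.ext h)
    omega
  have key : nu (Mab n a b)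
      = ∑ i : Fin n, (Finset.univ.filter fun j : Fin n => i = a ∨ j = b ∨ i = j).card := by
    unfold nu
    rw [Finset.card_filter]
    rw [Fintype.sum_prod_type]
    congr 1
    ext i
    rw [Finset.card_filter]
    congr 1
    ext j
    by_cases h : i = a ∨ j = b ∨ i = j <;> simp [Mab, h]
  rw [key]
  have hrow : ∀ i : Fin n,
      (Finset.univ.filter fun j : Fin n => i = a ∨ j = b ∨ i = j).card
        = if i = a then n else if i = b then 1 else 2 := by
    intro i
    by_cases hia : i = a
    · simp [hia]
    · have hfilter : (Finset.univ.filter fun j : Fin n => i = a ∨ j = b ∨ i = j)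
          = {b, i} := by
        ext j
        simp [hia, eq_comm, or_comm]
      rw [hfilter]
      by_cases hib : i = b
      · subst hib; simp [hia]
      · rw [Finset.card_pair (fun h => hib h.symm)]
        simp [hia, hib]
  simp only [hrow]
  rw [← Finset.add_sum_erase _ _ (Finset.mem_univ a)]
  have hb1 : b ∈ Finset.univ.erase a := by
    simp [Ne.symm hab]
  rw [← Finset.add_sum_erase _ _ hb1]
  have hconst : ∀ i ∈ (Finset.univ.erase a).erase b,
      (if i = a then n else if i = b then 1 else 2) = 2 := by
    intro i hi
    simp only [Finset.mem_erase] at hi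
    simp [hi.1, hi.2.1]
  rw [Finset.sum_congr rfl hconst]
  rw [Finset.sum_const]
  rw [Finset.card_erase_of_mem hb1, Finset.card_erase_of_mem (Finset.mem_univ a)]
  simp only [Finset.card_univ, Fintype.card_fin, smul_eq_mul, if_true,
    if_neg (Ne.symm hab)]
  omega

theorem stmt_6 (n : ℕ) (hn : 2 ≤ n) :
    ∃ A B : Matrix (Fin n) (Fin n) ℤ, IsNormal A ∧ IsNormal B ∧
      tropMul A B = 0 ∧ tropMul B A = 0 ∧ nu A + nu B = 4 * n - 6 + 2 * n := by
  haveI : NeZero n := ⟨by omega⟩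
  have h10 : (1 : Fin n) ≠ 0 := by
    have hv : ((1 : Fin n) : ℕ) = 1 % n := rfl
    intro h
    have := congrArg Fin.val h
    simp [hv] at this
    omega
  refine ⟨Mab n 1 0, Mab n 0 1, Mab_normal _ _, Mab_normal _ _, ?_, ?_, ?_⟩
  · apply trop_zero (by omega) (Mab_normal _ _) (Mab_normal _ _)
    intro i j
    exact ⟨0, by simp [Mab], by simp [Mab]⟩
  · apply trop_zero (by omega) (Mab_normal _ _) (Mab_normal _ _)
    intro i j
    exact ⟨1, by simp [Mab], by simp [Mab]⟩
  · rw [nu_Mab _ _ h10, nu_Mab _ _ (Ne.symm h10)]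
    omega
end

section
/- (Four sufficient conditions for orthogonality.) Let n ≥ 2 and let A, B be n×n normal matrices over R = {0, −1}. Suppose there exist k, m ∈ [n] such that one of the following holds: (0) A ∈ V(k;m) and B ∈ V(m;k); (1) A ∈ W(k;m) ∩ Z(k;m) ∩ Z(m;k) and B ∈ W(m;k); (2) A ∈ W(k;m) ∩ Z(m;k) and B ∈ W(m;k) ∩ Z(k;m); (3) A ∈ W(k;m) and B ∈ W(m;k) ∩ Z(k;m) ∩ Z(m;k). Then A⊙B = Z_n = B⊙A. -/
/-- `A ∈ V(p;q)`: the `p`-th row and the `q`-th column of `A` are zero. -/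
def memV {n : ℕ} (p q : Fin n) (A : Matrix (Fin n) (Fin n) ℤ) : Prop :=
  ∀ i, A p i = 0 ∧ A i q = 0

/-- `A ∈ W(p;q)`: `A p i = 0` for `i ≠ q` and `A i q = 0` for `i ≠ p`. -/
def memW {n : ℕ} (p q : Fin n) (A : Matrix (Fin n) (Fin n) ℤ) : Prop :=
  (∀ i, i ≠ q → A p i = 0) ∧ (∀ i, i ≠ p → A i q = 0)

lemma sSup_range_eq_zero {n : ℕ} (f : Fin n → ℤ) (hle : ∀ k, f k ≤ 0)
    (hex : ∃ k, f k = 0) : sSup (Set.range f) = 0 := by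
  obtain ⟨k, hk⟩ := hex
  apply le_antisymm
  · apply csSup_le ⟨f k, Set.mem_range_self k⟩
    rintro x ⟨t, rfl⟩; exact hle t
  · have : f k ∈ Set.range f := Set.mem_range_self k
    calc (0 : ℤ) = f k := hk.symm
    _ ≤ sSup (Set.range f) := le_csSup ⟨0, by rintro x ⟨t, rfl⟩; exact hle t⟩ this

lemma witness {n : ℕ} {k m : Fin n} {A B : Matrix (Fin n) (Fin n) ℤ}
    (hA : IsNormal A) (hB : IsNormal B)
    (hAW : memW k m A) (hBW : memW m k B)
    (h1 : A k m = 0 ∨ B k m = 0) (h2 : A m k = 0 ∨ B m k = 0)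
    (i j : Fin n) : ∃ t, A i t = 0 ∧ B t j = 0 := by
  by_cases hik : i = k
  · subst hik
    by_cases hjm : j = m
    · subst hjm
      rcases h1 with h | h
      · exact ⟨j, h, hB.1 j⟩
      · exact ⟨i, hA.1 i, h⟩
    · exact ⟨j, hAW.1 j hjm, hB.1 j⟩
  · by_cases hjk : j = k
    · subst hjk
      by_cases him : i = m
      · subst him
        rcases h2 with h | h
        · exact ⟨j, h, hB.1 j⟩
        · exact ⟨i, hA.1 i, h⟩
      · exact ⟨i, hA.1 i, hBW.2 i him⟩
    · exact ⟨m, hAW.2 i hik, hBW.1 j hjk⟩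

lemma tropMul_zero {n : ℕ} {k m : Fin n} {A B : Matrix (Fin n) (Fin n) ℤ}
    (hA : IsNormal A) (hB : IsNormal B)
    (hAW : memW k m A) (hBW : memW m k B)
    (h1 : A k m = 0 ∨ B k m = 0) (h2 : A m k = 0 ∨ B m k = 0) :
    tropMul A B = 0 := by
  ext i j
  show sSup (Set.range fun t => A i t + B t j) = 0
  apply sSup_range_eq_zero
  · intro t
    have h1 : A i t ≤ 0 := by rcases hA.2 i t with h | h <;> omega
    have h2 : B t j ≤ 0 := by rcases hB.2 t j with h | h <;> omega
    omega
  · obtain ⟨t, h1, h2⟩ := witness hA hB hAW hBW h1 h2 i j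
    exact ⟨t, by omega⟩

theorem stmt_7 {n : ℕ} (hn : 2 ≤ n) (A B : Matrix (Fin n) (Fin n) ℤ)
    (hA : IsNormal A) (hB : IsNormal B)
    (h : ∃ k m : Fin n,
      (memV k m A ∧ memV m k B) ∨
      (memW k m A ∧ A k m = 0 ∧ A m k = 0 ∧ memW m k B) ∨
      (memW k m A ∧ A m k = 0 ∧ memW m k B ∧ B k m = 0) ∨
      (memW k m A ∧ memW m k B ∧ B k m = 0 ∧ B m k = 0)) :
    tropMul A B = 0 ∧ tropMul B A = 0 := by
  obtain ⟨k, m, hcase⟩ := h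
  have key : memW k m A ∧ memW m k B ∧ (A k m = 0 ∨ B k m = 0) ∧
      (A m k = 0 ∨ B m k = 0) := by
    rcases hcase with ⟨hAV, hBV⟩ | ⟨hAW, h1, h2, hBW⟩ | ⟨hAW, h2, hBW, h1⟩ |
        ⟨hAW, hBW, h1, h2⟩
    · exact ⟨⟨fun i _ => (hAV i).1, fun i _ => (hAV i).2⟩,
        ⟨fun i _ => (hBV i).1, fun i _ => (hBV i).2⟩,
        Or.inl (hAV k).2, Or.inr (hBV k).1⟩
    · exact ⟨hAW, hBW, Or.inl h1, Or.inl h2⟩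
    · exact ⟨hAW, hBW, Or.inr h1, Or.inl h2⟩
    · exact ⟨hAW, hBW, Or.inr h1, Or.inr h2⟩
  obtain ⟨hAW, hBW, h1, h2⟩ := key
  constructor
  · exact tropMul_zero hA hB hAW hBW h1 h2
  · exact tropMul_zero hB hA hBW hAW (h2.symm.imp id id) (h1.symm.imp id id)
end

section
/- Let n ≥ 3 and let (A, B) be a minimal mutually orthogonal pair of n×n normal matrices over R = {0, −1}. Then there exist at least three pairwise distinct indices i ∈ [n] such that 2 ≤ Σ(i) ≤ 3, where Σ(i) = #{j ≠ i : A_{ij} = 0} + #{j ≠ i : B_{ij} = 0}. -/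
/-- Number of off-diagonal zero entries in the `i`-th row of `A`. -/
def rowZeros {n : ℕ} (A : Matrix (Fin n) (Fin n) ℤ) (i : Fin n) : ℕ :=
  (Finset.univ.filter (fun j => j ≠ i ∧ A i j = 0)).card

/-!
Every row of a mutually orthogonal pair carries at least two off-diagonal zeros: if row `i` of `A`
has none, `A ⊙ B = Z` can only route through `k = i`, so row `i` of `B` is entirely zero.
On the other hand the pair `crossMatrix a b`, `crossMatrix b a` is orthogonal with only `4n - 6`
off-diagonal zeros, so a minimal pair has `∑ Σ(i) ≤ 4n - 6`. If at most two rows had `Σ(i) ≤ 3`,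
the remaining rows would push the sum to at least `2·2 + 4(n - 2) = 4n - 4`.
-/

open Finset

lemma IsNormal.nonpos {n : ℕ} {A : Matrix (Fin n) (Fin n) ℤ} (hA : IsNormal A) (i j : Fin n) :
    A i j ≤ 0 := by
  rcases hA.2 i j with h | h <;> omega

lemma tropMul_eq_zero_iff {n : ℕ} {A B : Matrix (Fin n) (Fin n) ℤ}
    (hA : ∀ i j, A i j ≤ 0) (hB : ∀ i j, B i j ≤ 0) :
    tropMul A B = 0 ↔ ∀ i j, ∃ k, A i k = 0 ∧ B k j = 0 := by
  constructor
  · intro h i j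
    have : Nonempty (Fin n) := ⟨i⟩
    obtain ⟨k, hk⟩ : (0 : ℤ) ∈ Set.range fun k => A i k + B k j := by
      have h0 : sSup (Set.range fun k => A i k + B k j) = 0 := congrFun (congrFun h i) j
      exact h0 ▸ (Set.range_nonempty _).csSup_mem (Set.finite_range _)
    have hk : A i k + B k j = 0 := hk
    have := hA i k
    have := hB k j
    exact ⟨k, by omega, by omega⟩
  · intro h
    ext i j
    have : Nonempty (Fin n) := ⟨i⟩
    obtain ⟨k, hAk, hBk⟩ := h i j
    show sSup (Set.range fun k => A i k + B k j) = 0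
    refine le_antisymm (csSup_le (Set.range_nonempty _) ?_)
      (le_csSup (Set.finite_range _).bddAbove ⟨k, by simp [hAk, hBk]⟩)
    rintro _ ⟨m, rfl⟩
    exact add_nonpos (hA i m) (hB m j)

section rowZeros

variable {n : ℕ} {A : Matrix (Fin n) (Fin n) ℤ} {i : Fin n}

lemma card_filter_row_eq_zero (hA : ∀ i, A i i = 0) (i : Fin n) :
    #{j | A i j = 0} = rowZeros A i + 1 := by
  rw [rowZeros, ← card_insert_of_notMem (a := i) (by simp)]
  congr 1
  ext j
  by_cases hj : j = i <;> simp [hj, hA]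

lemma nu_eq_add_sum_rowZeros (hA : ∀ i, A i i = 0) : nu A = n + ∑ i, rowZeros A i := by
  rw [nu, card_filter, Fintype.sum_prod_type]
  simp_rw [← card_filter, card_filter_row_eq_zero hA, sum_add_distrib]
  simp [add_comm]

lemma rowZeros_le_sub_one : rowZeros A i ≤ n - 1 := by
  calc rowZeros A i ≤ #(univ.erase i) :=
        card_le_card fun j hj => mem_erase.2 ⟨(mem_filter.1 hj).2.1, mem_univ j⟩
    _ = n - 1 := by simp

lemma rowZeros_eq_sub_one (h : ∀ j, j ≠ i → A i j = 0) : rowZeros A i = n - 1 := by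
  rw [rowZeros, filter_congr fun j _ => and_iff_left_of_imp (h j), filter_ne']
  simp

lemma rowZeros_eq_zero_iff : rowZeros A i = 0 ↔ ∀ j, j ≠ i → A i j ≠ 0 := by
  simp [rowZeros, filter_eq_empty_iff]

lemma rowZeros_le_one {c : Fin n} (h : ∀ j, j ≠ i → A i j = 0 → j = c) : rowZeros A i ≤ 1 :=
  card_le_one.2 fun j hj k hk => by
    simp only [mem_filter, mem_univ, true_and] at hj hk
    rw [h j hj.1 hj.2, h k hk.1 hk.2]

end rowZeros

section orthogonal

variable {n : ℕ} {A B : Matrix (Fin n) (Fin n) ℤ}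

lemma rowZeros_eq_sub_one_of_tropMul_eq_zero (hA : IsNormal A) (hB : IsNormal B)
    (hAB : tropMul A B = 0) {i : Fin n} (hi : rowZeros A i = 0) : rowZeros B i = n - 1 := by
  refine rowZeros_eq_sub_one fun j _ => ?_
  obtain ⟨k, hAk, hBk⟩ := (tropMul_eq_zero_iff hA.nonpos hB.nonpos).1 hAB i j
  obtain rfl : k = i := by_contra fun hk => rowZeros_eq_zero_iff.1 hi k hk hAk
  exact hBk

lemma two_le_rowZeros_add (hn : 3 ≤ n) (hA : IsNormal A) (hB : IsNormal B)
    (hAB : tropMul A B = 0) (hBA : tropMul B A = 0) (i : Fin n) :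
    2 ≤ rowZeros A i + rowZeros B i := by
  by_cases hA0 : rowZeros A i = 0
  · have := rowZeros_eq_sub_one_of_tropMul_eq_zero hA hB hAB hA0
    omega
  by_cases hB0 : rowZeros B i = 0
  · have := rowZeros_eq_sub_one_of_tropMul_eq_zero hB hA hBA hB0
    omega
  omega

end orthogonal

section crossMatrix

variable {n : ℕ}

def crossMatrix (a b : Fin n) : Matrix (Fin n) (Fin n) ℤ :=
  Matrix.of fun i j => if i = a ∨ j = i ∨ j = b then 0 else -1

lemma isNormal_crossMatrix (a b : Fin n) : IsNormal (crossMatrix a b) :=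
  ⟨fun i => by simp [crossMatrix], fun i j => by simp only [crossMatrix, Matrix.of_apply]; split_ifs <;> simp⟩

lemma tropMul_crossMatrix (a b : Fin n) : tropMul (crossMatrix a b) (crossMatrix b a) = 0 :=
  (tropMul_eq_zero_iff (isNormal_crossMatrix a b).nonpos (isNormal_crossMatrix b a).nonpos).2
    fun _ _ => ⟨b, by simp [crossMatrix], by simp [crossMatrix]⟩

lemma rowZeros_crossMatrix_add_le {a b : Fin n} (hab : a ≠ b) (i : Fin n) :
    rowZeros (crossMatrix a b) i + (if i = b then 1 else 0) ≤ 1 + if i = a then n - 2 else 0 := by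
  have hn : 2 ≤ n := by
    have := Fin.val_ne_of_ne hab
    omega
  by_cases hia : i = a
  · subst hia
    have := rowZeros_le_sub_one (A := crossMatrix i b) (i := i)
    simp only [hab, if_false, if_true]
    omega
  by_cases hib : i = b
  · subst hib
    have : rowZeros (crossMatrix a i) i = 0 :=
      rowZeros_eq_zero_iff.2 fun j hj => by simp [crossMatrix, hia, hj]
    simp [this, hia]
  · have : rowZeros (crossMatrix a b) i ≤ 1 := rowZeros_le_one (c := b) fun j hj hj0 => by
      by_contra hjb
      simp [crossMatrix, hia, hj, hjb] at hj0
    simp only [hia, hib, if_false]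
    omega

lemma sum_rowZeros_crossMatrix_add_three_le {a b : Fin n} (hab : a ≠ b) :
    ∑ i, rowZeros (crossMatrix a b) i + 3 ≤ 2 * n := by
  have hn : 2 ≤ n := by
    have := Fin.val_ne_of_ne hab
    omega
  have := sum_le_sum fun i (_ : i ∈ univ) => rowZeros_crossMatrix_add_le hab i
  simp only [sum_add_distrib, sum_ite_eq', mem_univ, if_true, sum_const, card_univ,
    Fintype.card_fin, smul_eq_mul, mul_one] at this
  omega

end crossMatrix

lemma three_le_card_filter_le_three {ι : Type*} [Fintype ι] (f : ι → ℕ) (hf : ∀ i, 2 ≤ f i)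
    (hsum : ∑ i, f i + 6 ≤ 4 * Fintype.card ι) : 3 ≤ #{i | f i ≤ 3} := by
  have key : ∀ i, 4 ≤ f i + 2 * if f i ≤ 3 then 1 else 0 := fun i => by
    have := hf i
    split_ifs <;> omega
  have := sum_le_sum fun i (_ : i ∈ univ) => key i
  rw [sum_add_distrib, ← mul_sum, ← card_filter, sum_const, card_univ, smul_eq_mul] at this
  omega

theorem stmt_9 {n : ℕ} (hn : 3 ≤ n) (A B : Matrix (Fin n) (Fin n) ℤ)
    (hA : IsNormal A) (hB : IsNormal B)
    (h1 : tropMul A B = 0) (h2 : tropMul B A = 0)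
    (hmin : ∀ A' B' : Matrix (Fin n) (Fin n) ℤ, IsNormal A' → IsNormal B' →
      tropMul A' B' = 0 → tropMul B' A' = 0 → nu A + nu B ≤ nu A' + nu B') :
    ∃ i₁ i₂ i₃ : Fin n, i₁ ≠ i₂ ∧ i₁ ≠ i₃ ∧ i₂ ≠ i₃ ∧
      (2 ≤ rowZeros A i₁ + rowZeros B i₁ ∧ rowZeros A i₁ + rowZeros B i₁ ≤ 3) ∧
      (2 ≤ rowZeros A i₂ + rowZeros B i₂ ∧ rowZeros A i₂ + rowZeros B i₂ ≤ 3) ∧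
      (2 ≤ rowZeros A i₃ + rowZeros B i₃ ∧ rowZeros A i₃ + rowZeros B i₃ ≤ 3) := by
  let a : Fin n := ⟨0, by omega⟩
  let b : Fin n := ⟨1, by omega⟩
  have hab : a ≠ b := by simp [a, b, Fin.ext_iff]
  have hcross := hmin _ _ (isNormal_crossMatrix a b) (isNormal_crossMatrix b a)
    (tropMul_crossMatrix a b) (tropMul_crossMatrix b a)
  rw [nu_eq_add_sum_rowZeros hA.1, nu_eq_add_sum_rowZeros hB.1,
    nu_eq_add_sum_rowZeros (isNormal_crossMatrix a b).1,
    nu_eq_add_sum_rowZeros (isNormal_crossMatrix b a).1] at hcross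
  have hsum : ∑ i, (rowZeros A i + rowZeros B i) + 6 ≤ 4 * Fintype.card (Fin n) := by
    have := sum_rowZeros_crossMatrix_add_three_le hab
    have := sum_rowZeros_crossMatrix_add_three_le hab.symm
    rw [sum_add_distrib, Fintype.card_fin]
    omega
  have hlow := two_le_rowZeros_add hn hA hB h1 h2
  obtain ⟨i₁, hi₁, i₂, hi₂, i₃, hi₃, h12, h13, h23⟩ :=
    two_lt_card.1 (three_le_card_filter_le_three _ hlow hsum)
  simp only [mem_filter, mem_univ, true_and] at hi₁ hi₂ hi₃
  exact ⟨i₁, i₂, i₃, h12, h13, h23, ⟨hlow i₁, hi₁⟩, ⟨hlow i₂, hi₂⟩, ⟨hlow i₃, hi₃⟩⟩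
end

section
/- Let n ≥ 5 and let A, B be mutually orthogonal n×n normal matrices over R = {0, −1}. If for some s ∈ [n] the total number of off-diagonal zeros in the s-th rows satisfies #{j ≠ s : A_{sj} = 0} + #{j ≠ s : B_{sj} = 0} = 3, then either #{j ≠ s : A_{sj} = 0} = 1 and #{j ≠ s : B_{sj} = 0} = 2, or #{j ≠ s : A_{sj} = 0} = 2 and #{j ≠ s : B_{sj} = 0} = 1. -/
lemma key_aux {n : ℕ} (hn : 5 ≤ n) (A B : Matrix (Fin n) (Fin n) ℤ)
    (hA : IsNormal A) (hB : IsNormal B) (h1 : tropMul A B = 0)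
    (s : Fin n) (h0 : rowZeros A s = 0) : rowZeros A s + rowZeros B s ≠ 3 := by
  haveI : Nonempty (Fin n) := ⟨s⟩
  have hempty : Finset.univ.filter (fun j => j ≠ s ∧ A s j = 0) = ∅ :=
    Finset.card_eq_zero.mp h0
  have hne : ∀ j, j ≠ s → A s j = -1 := by
    intro j hj
    rcases hA.2 s j with h | h
    · exfalso
      have : j ∈ Finset.univ.filter (fun j => j ≠ s ∧ A s j = 0) := by simp [hj, h]
      simp [hempty] at this
    · exact h
  have hB0 : ∀ j, j ≠ s → B s j = 0 := by
    intro j hj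
    by_contra hb
    have hBj : B s j = -1 := (hB.2 s j).resolve_left hb
    have hentry : sSup (Set.range fun k => A s k + B k j) = 0 := by
      have := congrFun (congrFun h1 s) j
      simpa [tropMul] using this
    have hle : sSup (Set.range fun k => A s k + B k j) ≤ -1 := by
      apply csSup_le (Set.range_nonempty _)
      rintro x ⟨k, rfl⟩
      by_cases hk : k = s
      · subst hk; simp [hA.1, hBj]
      · have h1' := hne k hk
        have hBk : B k j ≤ 0 := by rcases hB.2 k j with h | h <;> omega
        simp only []
        omega
    omega
  have hcard : rowZeros B s = n - 1 := by
    have hset : Finset.univ.filter (fun j => j ≠ s ∧ B s j = 0)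
        = Finset.univ.erase s := by
      ext j
      simp only [Finset.mem_filter, Finset.mem_univ, true_and, Finset.mem_erase]
      constructor
      · rintro ⟨hj, -⟩; exact ⟨hj, trivial⟩
      · rintro ⟨hj, -⟩; exact ⟨hj, hB0 j hj⟩
    rw [rowZeros, hset, Finset.card_erase_of_mem (Finset.mem_univ s),
      Finset.card_univ, Fintype.card_fin]
  omega

theorem stmt_10 {n : ℕ} (hn : 5 ≤ n) (A B : Matrix (Fin n) (Fin n) ℤ)
    (hA : IsNormal A) (hB : IsNormal B)
    (h1 : tropMul A B = 0) (h2 : tropMul B A = 0)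
    (s : Fin n) (hs : rowZeros A s + rowZeros B s = 3) :
    (rowZeros A s = 1 ∧ rowZeros B s = 2) ∨ (rowZeros A s = 2 ∧ rowZeros B s = 1) := by
  have ha : rowZeros A s ≠ 0 := fun h => key_aux hn A B hA hB h1 s h hs
  have hb : rowZeros B s ≠ 0 := fun h => key_aux hn B A hB hA h2 s h (by omega)
  omega
end

section
/- Let n ≥ 5. An n×n normal matrix A over R = {0, −1} is self-orthogonal (A⊙A = Z_n) with the minimal number of off-diagonal zeros among all self-orthogonal n×n normal matrices if and only if there exists k ∈ [n] such that A is V(k;k)-generic, i.e., A_{ij} = 0 exactly when (i = j or i = k or j = k). Moreover, this minimal number of off-diagonal zeros equals Θ_n^Δ = 2n − 2; that is, the minimum of ν(A) − n over all self-orthogonal n×n normal matrices equals 2n − 2. -/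
/-!
Read the zero pattern of a normal matrix `A` as a reflexive relation `r`. Then `A ⊙ A = Z_n`
says that any `i, j` are joined by a path `i r k r j`, and `ν(A)` is the sum of the row counts
of `r`, each of which is at least `2`. If the row of `v` is `{v, u}`, every path out of `v`
passes through `u`, so this hub `u` is related to everything except possibly `v`. A total of at
most `3n - 2` forces two rows of size `2`; their hubs coincide, since two distinct hubs already
cost `4n - 6 > 3n - 2` when `n ≥ 5`. The common hub `k` is then related to everything, and the
remaining budget pins every other row to `{v, k}`.
-/

open Finset

section Counting

variable {ι : Type*} [Fintype ι]

lemma one_lt_card_filter_eq_two {d : ι → ℕ} (hd : ∀ i, 2 ≤ d i)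
    (hsum : ∑ i, d i + 2 ≤ 3 * Fintype.card ι) : 1 < #{i | d i = 2} := by
  have : 3 * Fintype.card ι ≤ ∑ i, d i + #{i | d i = 2} := by
    rw [card_filter, ← sum_add_distrib]
    calc 3 * Fintype.card ι = ∑ _i : ι, 3 := by simp [mul_comm]
      _ ≤ _ := sum_le_sum fun i _ => by have := hd i; split_ifs <;> omega
  omega

lemma add_add_mul_card_sub_two_le_sum [DecidableEq ι] {d : ι → ℕ} {m : ℕ} (hd : ∀ i, m ≤ d i)
    {a b : ι} (hab : a ≠ b) : d a + d b + m * (Fintype.card ι - 2) ≤ ∑ i, d i := by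
  have hb : b ∈ univ.erase a := mem_erase.2 ⟨hab.symm, mem_univ b⟩
  have hrest : m * (Fintype.card ι - 2) ≤ ∑ i ∈ (univ.erase a).erase b, d i := by
    have := card_nsmul_le_sum ((univ.erase a).erase b) d m fun i _ => hd i
    rwa [card_erase_of_mem hb, card_erase_of_mem (mem_univ a), card_univ, smul_eq_mul,
      mul_comm, Nat.sub_sub] at this
  rw [← add_sum_erase _ _ (mem_univ a), ← add_sum_erase _ _ hb]
  omega

end Counting

section Relation

variable {ι : Type*} {r : ι → ι → Prop}

-- A matrix is `V(k;k)`-generic exactly when its zero pattern is a star at `k`.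
def IsStar (r : ι → ι → Prop) (k : ι) : Prop := ∀ i j, r i j ↔ i = j ∨ i = k ∨ j = k

lemma rel_of_row_eq_pair (hr : ∀ i, r i i) (hsq : ∀ i j, Relation.Comp r r i j) {u v : ι}
    (hv : ∀ w, r v w ↔ w = v ∨ w = u) (w : ι) (hwv : w ≠ v) : r u w := by
  obtain ⟨k, hvk, hkw⟩ := hsq v w
  rcases (hv k).1 hvk with rfl | rfl
  · rcases (hv w).1 hkw with rfl | rfl
    · exact absurd rfl hwv
    · exact hr w
  · exact hkw

lemma comp_self_of_isStar {k : ι} (h : IsStar r k) (i j : ι) :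
    Relation.Comp r r i j :=
  ⟨k, (h i k).2 (by simp), (h k j).2 (by simp)⟩

variable [Fintype ι] (r) [DecidableRel r]

def rowCount (i : ι) : ℕ := #{j | r i j}

lemma card_filter_eq_sum_rowCount : #{p : ι × ι | r p.1 p.2} = ∑ i, rowCount r i := by
  simp only [rowCount, card_filter, Fintype.sum_prod_type]

variable {r} [DecidableEq ι]

lemma two_le_rowCount [Nontrivial ι] (hr : ∀ i, r i i) (hsq : ∀ i j, Relation.Comp r r i j)
    (i : ι) : 2 ≤ rowCount r i := by
  obtain ⟨j, hji⟩ := exists_ne i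
  obtain ⟨k, hik, hkj⟩ := hsq i j
  obtain ⟨l, hli, hil⟩ : ∃ l, l ≠ i ∧ r i l := by
    by_cases hki : k = i
    · exact ⟨j, hji, hki ▸ hkj⟩
    · exact ⟨k, hki, hik⟩
  calc 2 = #{i, l} := (card_pair hli.symm).symm
    _ ≤ rowCount r i := card_le_card fun x hx => by
      rcases mem_insert.1 hx with rfl | hx
      · simpa using hr x
      · simpa [mem_singleton.1 hx] using hil

lemma exists_row_eq_pair_of_rowCount_eq_two (hr : ∀ i, r i i) {v : ι} (hv : rowCount r v = 2) :
    ∃ u, u ≠ v ∧ ∀ w, r v w ↔ w = v ∨ w = u := by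
  have hvmem : v ∈ ({j | r v j} : Finset ι) := by simpa using hr v
  obtain ⟨u, hu⟩ := card_eq_one.1 <| by
    rw [card_erase_of_mem hvmem]; exact congrArg (· - 1) hv
  have hmem : ∀ w, w ≠ v ∧ r v w ↔ w = u := fun w => by
    simpa using congrArg (w ∈ ·) hu
  refine ⟨u, ((hmem u).2 rfl).1, fun w => ?_⟩
  by_cases hwv : w = v
  · simp [hwv, hr v]
  · simp [hwv, ← hmem w]

lemma card_le_rowCount_add_one {u v : ι} (h : ∀ w, w ≠ v → r u w) :
    Fintype.card ι ≤ rowCount r u + 1 := by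
  rw [← card_univ, ← card_erase_add_one (mem_univ v)]
  gcongr
  exact card_le_card fun w hw => by simpa using h w (ne_of_mem_erase hw)

lemma exists_forall_rel_of_sum_rowCount_le (hn : 5 ≤ Fintype.card ι) (hr : ∀ i, r i i)
    (hsq : ∀ i j, Relation.Comp r r i j) (hsum : ∑ i, rowCount r i + 2 ≤ 3 * Fintype.card ι) :
    ∃ u, ∀ w, r u w := by
  have : Nontrivial ι := Fintype.one_lt_card_iff_nontrivial.1 (by omega)
  have hd := two_le_rowCount hr hsq
  obtain ⟨v₁, hv₁, v₂, hv₂, hv⟩ := one_lt_card.1 (one_lt_card_filter_eq_two hd hsum)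
  obtain ⟨u₁, -, hu₁⟩ := exists_row_eq_pair_of_rowCount_eq_two hr (mem_filter.1 hv₁).2
  obtain ⟨u₂, -, hu₂⟩ := exists_row_eq_pair_of_rowCount_eq_two hr (mem_filter.1 hv₂).2
  have hub₁ := rel_of_row_eq_pair hr hsq hu₁
  have hub₂ := rel_of_row_eq_pair hr hsq hu₂
  obtain rfl : u₁ = u₂ := by
    by_contra hne
    have := add_add_mul_card_sub_two_le_sum hd hne
    have := card_le_rowCount_add_one hub₁
    have := card_le_rowCount_add_one hub₂
    omega
  refine ⟨u₁, fun w => ?_⟩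
  by_cases hw : w = v₁
  · exact hub₂ w (hw ▸ hv)
  · exact hub₁ w hw

theorem exists_isStar_of_sum_rowCount_le (hn : 5 ≤ Fintype.card ι) (hr : ∀ i, r i i)
    (hsq : ∀ i j, Relation.Comp r r i j) (hsum : ∑ i, rowCount r i + 2 ≤ 3 * Fintype.card ι) :
    ∃ k, IsStar r k := by
  have : Nontrivial ι := Fintype.one_lt_card_iff_nontrivial.1 (by omega)
  have hd := two_le_rowCount hr hsq
  obtain ⟨k, hk⟩ := exists_forall_rel_of_sum_rowCount_le hn hr hsq hsum
  have hkc : rowCount r k = Fintype.card ι := by simp [rowCount, hk]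
  have hrow : ∀ v, v ≠ k → rowCount r v = 2 := fun v hv => by
    have := add_add_mul_card_sub_two_le_sum hd hv.symm
    have := hd v
    omega
  have htarget : ∀ v, v ≠ k → ∀ w, r v w ↔ w = v ∨ w = k := fun v hv => by
    obtain ⟨u, -, hu⟩ := exists_row_eq_pair_of_rowCount_eq_two hr (hrow v hv)
    obtain rfl : u = k := by
      by_contra huk
      have := card_le_rowCount_add_one (rel_of_row_eq_pair hr hsq hu)
      have := hrow u huk
      omega
    exact hu
  refine ⟨k, fun i j => ?_⟩
  by_cases hi : i = k
  · simp [hi, hk]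
  · rw [htarget i hi]
    tauto

lemma sum_rowCount_of_isStar {k : ι} (h : IsStar r k) :
    ∑ i, rowCount r i + 2 = 3 * Fintype.card ι := by
  unfold IsStar at h
  have hk : rowCount r k = Fintype.card ι := by simp [rowCount, h]
  have hv : ∀ v ∈ univ.erase k, rowCount r v = 2 := fun v hv => by
    have hvk := ne_of_mem_erase hv
    have : ({j | r v j} : Finset ι) = {v, k} := by
      ext j
      simp only [mem_filter, mem_univ, true_and, h, mem_insert, mem_singleton, hvk, false_or]
      tauto
    rw [rowCount, this, card_pair hvk]
  rw [← add_sum_erase _ _ (mem_univ k), sum_congr rfl hv, hk, sum_const,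
    card_erase_of_mem (mem_univ _), card_univ, smul_eq_mul]
  have := Fintype.card_pos_iff.2 ⟨k⟩
  omega

theorem three_mul_card_le_sum_rowCount_add_two (hn : 5 ≤ Fintype.card ι) (hr : ∀ i, r i i)
    (hsq : ∀ i j, Relation.Comp r r i j) : 3 * Fintype.card ι ≤ ∑ i, rowCount r i + 2 := by
  by_contra! h
  obtain ⟨k, hk⟩ := exists_isStar_of_sum_rowCount_le hn hr hsq h.le
  have := sum_rowCount_of_isStar hk
  omega

end Relation

lemma sSup_range_eq_iff_exists_eq {ι α : Type*} [Finite ι] [Nonempty ι]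
    [ConditionallyCompleteLinearOrder α] {f : ι → α} {a : α} (hf : ∀ k, f k ≤ a) :
    sSup (Set.range f) = a ↔ ∃ k, f k = a := by
  refine ⟨fun h => ?_, fun ⟨k, hk⟩ => ?_⟩
  · obtain ⟨k, hk⟩ := exists_eq_ciSup_of_finite (f := f)
    exact ⟨k, hk.trans h⟩
  · refine le_antisymm (csSup_le (Set.range_nonempty f) ?_) ?_
    · rintro _ ⟨j, rfl⟩
      exact hf j
    · exact hk ▸ le_csSup (Set.finite_range f).bddAbove ⟨k, rfl⟩

section Matrix

variable {n : ℕ} {A : Matrix (Fin n) (Fin n) ℤ}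

lemma IsNormal.add_le_zero (hA : IsNormal A) (i k j : Fin n) : A i k + A k j ≤ 0 := by
  rcases hA.2 i k with h | h <;> rcases hA.2 k j with h' | h' <;> omega

lemma IsNormal.add_eq_zero_iff (hA : IsNormal A) (i k j : Fin n) :
    A i k + A k j = 0 ↔ A i k = 0 ∧ A k j = 0 := by
  rcases hA.2 i k with h | h <;> rcases hA.2 k j with h' | h' <;> omega

lemma IsNormal.tropMul_self_eq_zero_iff [NeZero n] (hA : IsNormal A) :
    tropMul A A = 0 ↔ ∀ i j, Relation.Comp (A · · = 0) (A · · = 0) i j := by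
  rw [← Matrix.ext_iff]
  refine forall₂_congr fun i j => ?_
  rw [tropMul, Matrix.of_apply, Matrix.zero_apply,
    sSup_range_eq_iff_exists_eq (hA.add_le_zero i · j)]
  simp only [hA.add_eq_zero_iff]
  rfl

-- Instance search does not unfold the lambda to `Decidable (A i j = 0)` by itself.
instance (A : Matrix (Fin n) (Fin n) ℤ) : DecidableRel (A · · = 0) :=
  fun i j => inferInstanceAs (Decidable (A i j = 0))

lemma nu_eq_sum_rowCount (A : Matrix (Fin n) (Fin n) ℤ) :
    nu A = ∑ i, rowCount (A · · = 0) i :=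
  card_filter_eq_sum_rowCount (A · · = 0)

def starMatrix (k : Fin n) : Matrix (Fin n) (Fin n) ℤ :=
  Matrix.of fun i j => if i = j ∨ i = k ∨ j = k then 0 else -1

lemma isStar_starMatrix (k : Fin n) : IsStar (starMatrix k · · = 0) k := fun i j => by
  simp only [starMatrix, Matrix.of_apply]
  split_ifs with h <;> simp [h]

lemma isNormal_starMatrix (k : Fin n) : IsNormal (starMatrix k) := by
  refine ⟨fun i => by simp [starMatrix], fun i j => ?_⟩
  simp only [starMatrix, Matrix.of_apply]
  split_ifs <;> simp

lemma IsNormal.three_mul_le_nu_add_two (hn : 5 ≤ n) (hA : IsNormal A) (hAA : tropMul A A = 0) :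
    3 * n ≤ nu A + 2 := by
  have : NeZero n := ⟨by omega⟩
  simpa [nu_eq_sum_rowCount] using three_mul_card_le_sum_rowCount_add_two (by simpa using hn)
    hA.1 (hA.tropMul_self_eq_zero_iff.1 hAA)

lemma IsNormal.exists_isStar_of_nu_add_two_le (hn : 5 ≤ n) (hA : IsNormal A)
    (hAA : tropMul A A = 0) (hnu : nu A + 2 ≤ 3 * n) :
    ∃ k, IsStar (A · · = 0) k := by
  have : NeZero n := ⟨by omega⟩
  exact exists_isStar_of_sum_rowCount_le (by simpa using hn) hA.1
    (hA.tropMul_self_eq_zero_iff.1 hAA) (by simpa [nu_eq_sum_rowCount] using hnu)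

lemma nu_add_two_of_isStar {k : Fin n} (hk : IsStar (A · · = 0) k) :
    nu A + 2 = 3 * n := by
  simpa [nu_eq_sum_rowCount] using sum_rowCount_of_isStar hk

lemma IsNormal.tropMul_self_eq_zero_of_isStar (hA : IsNormal A) {k : Fin n}
    (hk : IsStar (A · · = 0) k) : tropMul A A = 0 :=
  have : NeZero n := ⟨k.pos.ne'⟩
  hA.tropMul_self_eq_zero_iff.2 (comp_self_of_isStar hk)

end Matrix

theorem stmt_13 (n : ℕ) (hn : 5 ≤ n) :
    (∀ A : Matrix (Fin n) (Fin n) ℤ, IsNormal A →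
      ((tropMul A A = 0 ∧
          ∀ A' : Matrix (Fin n) (Fin n) ℤ, IsNormal A' → tropMul A' A' = 0 →
            nu A ≤ nu A') ↔
        ∃ k : Fin n, ∀ i j, A i j = 0 ↔ (i = j ∨ i = k ∨ j = k))) ∧
    (∃ A : Matrix (Fin n) (Fin n) ℤ, IsNormal A ∧ tropMul A A = 0 ∧
      nu A = 2 * n - 2 + n) ∧
    (∀ A : Matrix (Fin n) (Fin n) ℤ, IsNormal A → tropMul A A = 0 →
      2 * n - 2 + n ≤ nu A) := by
  have lower (A : Matrix (Fin n) (Fin n) ℤ) (hA : IsNormal A) (hAA : tropMul A A = 0) :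
      2 * n - 2 + n ≤ nu A := by
    have := hA.three_mul_le_nu_add_two hn hAA
    omega
  let k₀ : Fin n := ⟨0, by omega⟩
  have hB := isNormal_starMatrix k₀
  have hBB := hB.tropMul_self_eq_zero_of_isStar (isStar_starMatrix k₀)
  have hBnu := nu_add_two_of_isStar (isStar_starMatrix k₀)
  refine ⟨fun A hA => ⟨fun ⟨hAA, hmin⟩ => ?_, fun ⟨k, hk⟩ => ?_⟩,
    ⟨_, hB, hBB, by omega⟩, lower⟩
  · exact hA.exists_isStar_of_nu_add_two_le hn hAA (by have := hmin _ hB hBB; omega)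
  · have := nu_add_two_of_isStar hk
    exact ⟨hA.tropMul_self_eq_zero_of_isStar hk, fun A' hA' hA'A' => by
      have := lower A' hA' hA'A'
      omega⟩
end

section
/- (Self-orthogonality by bordering.) Let A = [[B, v],[w^T, 0]] be an n×n normal matrix over R = {0, −1} in block form, where B is an (n−1)×(n−1) normal matrix and v, w are vectors with entries in R. If B is self-orthogonal (B⊙B = Z_{n−1}), then A is self-orthogonal (A⊙A = Z_n) if and only if B⊙v and w^T⊙B are zero vectors. -/
/-- Tropical product matrix-by-column-vector. -/
noncomputable def tropMulVec {n : ℕ} (B : Matrix (Fin n) (Fin n) ℤ) (v : Fin n → ℤ) :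
    Fin n → ℤ :=
  fun i => sSup (Set.range fun k => B i k + v k)

/-- Tropical product row-vector-by-matrix. -/
noncomputable def vecTropMul {n : ℕ} (w : Fin n → ℤ) (B : Matrix (Fin n) (Fin n) ℤ) :
    Fin n → ℤ :=
  fun j => sSup (Set.range fun k => w k + B k j)

lemma key {m : ℕ} [Nonempty (Fin m)] (f : Fin m → ℤ) (h : ∀ k, f k ≤ 0) :
    sSup (Set.range f) = 0 ↔ ∃ k, f k = 0 := by
  constructor
  · intro hs
    obtain ⟨k, hk⟩ := (Set.range_nonempty f).csSup_mem (Set.finite_range f)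
    exact ⟨k, hk.trans hs⟩
  · rintro ⟨k, hk⟩
    refine le_antisymm (csSup_le (Set.range_nonempty f) ?_) ?_
    · rintro x ⟨k, rfl⟩; exact h k
    · exact hk ▸ le_csSup (Set.finite_range f).bddAbove ⟨k, rfl⟩

lemma addz (a b : ℤ) (ha : a = 0 ∨ a = -1) (hb : b = 0 ∨ b = -1) :
    (a + b ≤ 0) ∧ (a + b = 0 ↔ a = 0 ∧ b = 0) := by omega

theorem stmt_16 (n : ℕ)
    (B : Matrix (Fin n) (Fin n) ℤ) (v w : Fin n → ℤ)
    (A : Matrix (Fin (n + 1)) (Fin (n + 1)) ℤ)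
    (hA : IsNormal A) (hB : IsNormal B)
    (hv : ∀ i, v i = 0 ∨ v i = -1) (hw : ∀ i, w i = 0 ∨ w i = -1)
    (hblk : (∀ i j : Fin n, A i.castSucc j.castSucc = B i j) ∧
            (∀ i : Fin n, A i.castSucc (Fin.last n) = v i) ∧
            (∀ j : Fin n, A (Fin.last n) j.castSucc = w j) ∧
            A (Fin.last n) (Fin.last n) = 0)
    (hself : tropMul B B = 0) :
    tropMul A A = 0 ↔
      ((∀ i, tropMulVec B v i = 0) ∧ (∀ j, vecTropMul w B j = 0)) := by
  obtain ⟨hAd, hAe⟩ := hA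
  obtain ⟨hBd, hBe⟩ := hB
  obtain ⟨h1, h2, h3, h4⟩ := hblk
  have hBB : ∀ i j : Fin n, ∃ k, B i k = 0 ∧ B k j = 0 := by
    intro i j
    have : Nonempty (Fin n) := ⟨i⟩
    have h0 : sSup (Set.range fun k => B i k + B k j) = 0 := by
      have := congrFun (congrFun hself i) j
      simpa [tropMul] using this
    obtain ⟨k, hk⟩ := (key _ fun k => (addz _ _ (hBe i k) (hBe k j)).1).1 h0
    exact ⟨k, (addz _ _ (hBe i k) (hBe k j)).2.1 hk⟩
  have hAA : tropMul A A = 0 ↔ ∀ i j, ∃ k, A i k = 0 ∧ A k j = 0 := by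
    rw [← Matrix.ext_iff]
    constructor
    · intro hh i j
      have h0 : sSup (Set.range fun k => A i k + A k j) = 0 := by
        simpa [tropMul] using hh i j
      obtain ⟨k, hk⟩ := (key _ fun k => (addz _ _ (hAe i k) (hAe k j)).1).1 h0
      exact ⟨k, (addz _ _ (hAe i k) (hAe k j)).2.1 hk⟩
    · intro hh i j
      obtain ⟨k, hk1, hk2⟩ := hh i j
      simp only [tropMul, Matrix.of_apply, Matrix.zero_apply]
      exact (key _ fun k => (addz _ _ (hAe i k) (hAe k j)).1).2
        ⟨k, by rw [hk1, hk2]; ring⟩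
  have hBv : ∀ i : Fin n, (tropMulVec B v i = 0 ↔ ∃ k, B i k = 0 ∧ v k = 0) := by
    intro i
    have : Nonempty (Fin n) := ⟨i⟩
    unfold tropMulVec
    rw [key _ fun k => (addz _ _ (hBe i k) (hv k)).1]
    exact exists_congr fun k => (addz _ _ (hBe i k) (hv k)).2
  have hwB : ∀ j : Fin n, (vecTropMul w B j = 0 ↔ ∃ k, w k = 0 ∧ B k j = 0) := by
    intro j
    have : Nonempty (Fin n) := ⟨j⟩
    unfold vecTropMul
    rw [key _ fun k => (addz _ _ (hw k) (hBe k j)).1]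
    exact exists_congr fun k => (addz _ _ (hw k) (hBe k j)).2
  rw [hAA]
  constructor
  · intro hh
    constructor
    · intro i
      rw [hBv i]
      obtain ⟨k, hk1, hk2⟩ := hh i.castSucc (Fin.last n)
      rcases Fin.eq_castSucc_or_eq_last k with ⟨k', rfl⟩ | rfl
      · exact ⟨k', by rw [← h1 i k']; exact hk1, by rw [← h2 k']; exact hk2⟩
      · exact ⟨i, hBd i, by rw [← h2 i]; exact hk1⟩
    · intro j
      rw [hwB j]
      obtain ⟨k, hk1, hk2⟩ := hh (Fin.last n) j.castSucc
      rcases Fin.eq_castSucc_or_eq_last k with ⟨k', rfl⟩ | rfl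
      · exact ⟨k', by rw [← h3 k']; exact hk1, by rw [← h1 k' j]; exact hk2⟩
      · exact ⟨j, by rw [← h3 j]; exact hk2, hBd j⟩
  · rintro ⟨hbv, hwb⟩ i j
    refine Fin.lastCases ?_ ?_ i
    · refine Fin.lastCases ?_ ?_ j
      · exact ⟨Fin.last n, h4, h4⟩
      · intro j'
        obtain ⟨k, hk1, hk2⟩ := (hwB j').1 (hwb j')
        exact ⟨k.castSucc, by rw [h3 k]; exact hk1, by rw [h1 k j']; exact hk2⟩
    · intro i'
      refine Fin.lastCases ?_ ?_ j
      · obtain ⟨k, hk1, hk2⟩ := (hBv i').1 (hbv i')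
        exact ⟨k.castSucc, by rw [h1 i' k]; exact hk1, by rw [h2 k]; exact hk2⟩
      · intro j'
        obtain ⟨k, hk1, hk2⟩ := hBB i' j'
        exact ⟨k.castSucc, by rw [h1 i' k]; exact hk1, by rw [h1 k j']; exact hk2⟩
end

section
/- Let n ≥ 3. The girth of the graph ORTHO equals 3, and the girth of the graph VNL equals 3. -/
/-- `A` is strictly normal: zero diagonal and all off-diagonal entries equal `-1`. -/
def IsStrictlyNormal {n : ℕ} (A : Matrix (Fin n) (Fin n) ℤ) : Prop :=
  (∀ i, A i i = 0) ∧ ∀ i j, i ≠ j → A i j = -1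

/-- Vertices of `ORTHO`: normal matrices that are neither strictly normal nor zero. -/
def OrthoVertex (n : ℕ) : Type :=
  {A : Matrix (Fin n) (Fin n) ℤ // IsNormal A ∧ ¬ IsStrictlyNormal A ∧ A ≠ 0}

/-- The graph `ORTHO`: distinct vertices are adjacent iff mutually orthogonal. -/
noncomputable def orthoGraph (n : ℕ) : SimpleGraph (OrthoVertex n) where
  Adj X Y := X ≠ Y ∧ tropMul X.1 Y.1 = 0 ∧ tropMul Y.1 X.1 = 0
  symm := ⟨by
    rintro X Y ⟨hne, h1, h2⟩
    exact ⟨hne.symm, h2, h1⟩⟩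
  loopless := ⟨fun X h => h.1 rfl⟩

/-- Vertices of `VNL`: nonzero normal matrices in some `V(p;q)` with `p ≠ q`. -/
def VNLVertex (n : ℕ) : Type :=
  {A : Matrix (Fin n) (Fin n) ℤ //
    IsNormal A ∧ A ≠ 0 ∧ ∃ p q : Fin n, p ≠ q ∧ memV p q A}

/-- The graph `VNL`: distinct vertices `A, B` are adjacent iff there are `p, q`
with `A ∈ V(p;q)` and `B ∈ V(q;p)`. -/
def vnlGraph (n : ℕ) : SimpleGraph (VNLVertex n) where
  Adj X Y := X ≠ Y ∧ ∃ p q : Fin n, memV p q X.1 ∧ memV q p Y.1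
  symm := ⟨by
    rintro X Y ⟨hne, p, q, h1, h2⟩
    exact ⟨hne.symm, q, p, h2, h1⟩⟩
  loopless := ⟨fun X h => h.1 rfl⟩

/-- Vertices of `WNL`: nonzero normal matrices in some `W(p;q)` with `p ≠ q`. -/
def WNLVertex (n : ℕ) : Type :=
  {A : Matrix (Fin n) (Fin n) ℤ //
    IsNormal A ∧ A ≠ 0 ∧ ∃ p q : Fin n, p ≠ q ∧ memW p q A}

/-- The graph `WNL`: distinct vertices `A, B` are adjacent iff there are `k, m`
with one of the three `W`/`Z` sufficient conditions. -/
def wnlGraph (n : ℕ) : SimpleGraph (WNLVertex n) where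
  Adj X Y := X ≠ Y ∧ ∃ k m : Fin n,
    (memW k m X.1 ∧ X.1 k m = 0 ∧ X.1 m k = 0 ∧ memW m k Y.1) ∨
    (memW k m X.1 ∧ X.1 m k = 0 ∧ memW m k Y.1 ∧ Y.1 k m = 0) ∨
    (memW k m X.1 ∧ memW m k Y.1 ∧ Y.1 k m = 0 ∧ Y.1 m k = 0)
  symm := ⟨by
    rintro X Y ⟨hne, k, m, hc⟩
    exact ⟨hne.symm, m, k, by tauto⟩⟩
  loopless := ⟨fun X h => h.1 rfl⟩

/-! Any two distinct off-diagonal single-entry matrices `-E_rc`, `-E_r'c'` are adjacent in both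
graphs once `n ≥ 3`: a third index `k ∉ {c, r'}` gives a zero column of the first and a zero row
of the second, so their tropical product is `0`; likewise indices `p ∉ {r, c'}`, `q ∉ {c, r'}`
put them in `V(p;q)` and `V(q;p)`. Three such matrices form a triangle, and a simple graph
containing a triangle has girth `3`. -/

lemma SimpleGraph.girth_eq_three_of_adj {V : Type*} {G : SimpleGraph V} {a b c : V}
    (hab : G.Adj a b) (hac : G.Adj a c) (hbc : G.Adj b c) : G.girth = 3 := by
  classical
  obtain ⟨u, w, hw, hlen⟩ := SimpleGraph.is3Clique_iff_exists_cycle_length_three.mp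
    ⟨_, SimpleGraph.is3Clique_triple_iff.mpr ⟨hab, hac, hbc⟩⟩
  exact le_antisymm (hlen ▸ SimpleGraph.girth_le_length hw) (SimpleGraph.three_le_girth (· w hw))

lemma Fin.exists_ne_and_ne {n : ℕ} (hn : 3 ≤ n) (a b : Fin n) : ∃ k, k ≠ a ∧ k ≠ b := by
  classical
  obtain ⟨k, -, hk⟩ := Finset.exists_mem_notMem_of_card_lt_card (s := {a, b}) (t := Finset.univ)
    (by simpa using (Finset.card_le_two : Finset.card {a, b} ≤ 2).trans_lt hn)
  exact ⟨k, by simpa [not_or] using hk⟩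

lemma tropMul_eq_zero_of_nonpos {n : ℕ} {A B : Matrix (Fin n) (Fin n) ℤ}
    (hA : ∀ i j, A i j ≤ 0) (hB : ∀ i j, B i j ≤ 0) (h : ∀ i j, ∃ k, A i k = 0 ∧ B k j = 0) :
    tropMul A B = 0 := by
  ext i j
  obtain ⟨k, hAk, hBk⟩ := h i j
  refine le_antisymm (csSup_le ⟨_, k, rfl⟩ ?_) (le_csSup (Set.finite_range _).bddAbove ⟨k, ?_⟩)
  · rintro _ ⟨m, rfl⟩
    exact add_nonpos (hA i m) (hB m j)
  · simp [hAk, hBk]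

open Matrix

section single

variable {n : ℕ} {r c r' c' : Fin n}

lemma single_neg_one_nonpos (r c i j : Fin n) : single r c (-1 : ℤ) i j ≤ 0 := by
  rw [single_apply]; split_ifs <;> norm_num

lemma isNormal_single (h : r ≠ c) : IsNormal (single r c (-1 : ℤ)) :=
  ⟨fun i => single_apply_of_ne _ _ _ _ _ fun hi => h (hi.1.trans hi.2.symm),
    fun i j => by rw [single_apply]; split_ifs <;> simp⟩

lemma not_isStrictlyNormal_single (h : r ≠ c) : ¬ IsStrictlyNormal (single r c (-1 : ℤ)) :=
  fun hs => by simpa [single_apply_of_row_ne h] using hs.2 c r h.symm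

lemma single_neg_one_ne (h : (r, c) ≠ (r', c')) : single r c (-1 : ℤ) ≠ single r' c' (-1) := by
  intro he
  have := congr_fun₂ he r c
  rw [single_apply_same, single_apply, if_neg fun h' => h (by rw [h'.1, h'.2])] at this
  norm_num at this

lemma single_neg_one_ne_zero (r c : Fin n) : single r c (-1 : ℤ) ≠ 0 :=
  fun h0 => by simpa using congr_fun₂ h0 r c

lemma memV_single {p q : Fin n} (hp : p ≠ r) (hq : q ≠ c) : memV p q (single r c (-1 : ℤ)) :=
  fun _ => ⟨single_apply_of_row_ne hp.symm _ _ _, single_apply_of_col_ne _ _ hq.symm _⟩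

lemma tropMul_single_single (hn : 3 ≤ n) (r c r' c' : Fin n) :
    tropMul (single r c (-1 : ℤ)) (single r' c' (-1)) = 0 := by
  obtain ⟨k, hkc, hkr'⟩ := Fin.exists_ne_and_ne hn c r'
  exact tropMul_eq_zero_of_nonpos (single_neg_one_nonpos r c) (single_neg_one_nonpos r' c')
    fun i j => ⟨k, single_apply_of_col_ne _ _ hkc.symm _, single_apply_of_row_ne hkr'.symm _ _ _⟩

def OrthoVertex.single (h : r ≠ c) : OrthoVertex n :=
  ⟨Matrix.single r c (-1), isNormal_single h, not_isStrictlyNormal_single h,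
    single_neg_one_ne_zero r c⟩

def VNLVertex.single (h : r ≠ c) : VNLVertex n :=
  ⟨Matrix.single r c (-1), isNormal_single h, single_neg_one_ne_zero r c,
    c, r, h.symm, memV_single h.symm h⟩

lemma orthoGraph_adj_single (hn : 3 ≤ n) (h : r ≠ c) (h' : r' ≠ c') (hne : (r, c) ≠ (r', c')) :
    (orthoGraph n).Adj (OrthoVertex.single h) (OrthoVertex.single h') :=
  ⟨fun he => single_neg_one_ne hne (congrArg Subtype.val he),
    tropMul_single_single hn r c r' c', tropMul_single_single hn r' c' r c⟩

lemma vnlGraph_adj_single (hn : 3 ≤ n) (h : r ≠ c) (h' : r' ≠ c') (hne : (r, c) ≠ (r', c')) :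
    (vnlGraph n).Adj (VNLVertex.single h) (VNLVertex.single h') := by
  obtain ⟨p, hpr, hpc'⟩ := Fin.exists_ne_and_ne hn r c'
  obtain ⟨q, hqc, hqr'⟩ := Fin.exists_ne_and_ne hn c r'
  exact ⟨fun he => single_neg_one_ne hne (congrArg Subtype.val he),
    p, q, memV_single hpr hqc, memV_single hqr' hpc'⟩

end single

theorem stmt_17 (n : ℕ) (hn : 3 ≤ n) :
    (orthoGraph n).girth = 3 ∧ (vnlGraph n).girth = 3 := by
  obtain ⟨a, b, c, hab, hac, hbc⟩ :=
    Fintype.two_lt_card_iff.mp (by rw [Fintype.card_fin]; omega : 2 < Fintype.card (Fin n))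
  have hab_ac : (a, b) ≠ (a, c) := fun he => hbc (Prod.ext_iff.mp he).2
  have hab_bc : (a, b) ≠ (b, c) := fun he => hab (Prod.ext_iff.mp he).1
  have hac_bc : (a, c) ≠ (b, c) := fun he => hab (Prod.ext_iff.mp he).1
  exact ⟨SimpleGraph.girth_eq_three_of_adj (orthoGraph_adj_single hn hab hac hab_ac)
      (orthoGraph_adj_single hn hab hbc hab_bc) (orthoGraph_adj_single hn hac hbc hac_bc),
    SimpleGraph.girth_eq_three_of_adj (vnlGraph_adj_single hn hab hac hab_ac)
      (vnlGraph_adj_single hn hab hbc hab_bc) (vnlGraph_adj_single hn hac hbc hac_bc)⟩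
end
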